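/- arXiv:1605.03244 — 6 statements merged into one kernel-verified Lean document; each statement's English description precedes it below -/
import Mathlib

section
/- For all real numbers κ ≥ 0, μ > 0, w̄ > 0 and s ≥ 0, the series ∑_{n=0}^∞ e^{-μκ} (μκ)^n / n! · (1 + s·w̄/(μ(1+κ)))^{-(n+μ)} converges and equals (1 + s·w̄/(μ(1+κ)))^{-μ} · exp( - μκ·s·w̄ / (s·w̄ + μ(1+κ)) ). -/
/-!
Write `b = 1 + s w̄ / (μ (1 + κ))`. Since `b^{-(n+μ)} = b^{-μ} (1/b)^n`, the series is `b^{-μ}` times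
the Poisson generating function `∑ e^{-a} a^n / n! · t^n = e^{-a + a t}` at `a = μκ`, `t = 1/b`,
and `-a + a/b` simplifies to the exponent of the closed form.
-/

open Real Nat

theorem hasSum_poisson_mul_rpow_neg {b : ℝ} (hb : 0 < b) (a c : ℝ) :
    HasSum (fun n : ℕ => exp (-a) * a ^ n / n ! * b ^ (-((n : ℝ) + c)))
      (b ^ (-c) * exp (-a + a / b)) := by
  have hexp : HasSum (fun n : ℕ => (a / b) ^ n / n !) (exp (a / b)) := by
    rw [exp_eq_exp_ℝ]
    exact NormedSpace.expSeries_div_hasSum_exp (a / b)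
  have hterm : (fun n : ℕ => exp (-a) * a ^ n / n ! * b ^ (-((n : ℝ) + c))) =
      fun n : ℕ => exp (-a) * b ^ (-c) * ((a / b) ^ n / n !) := by
    funext n
    have hpow : b ^ (-((n : ℝ) + c)) = (b ^ n)⁻¹ * b ^ (-c) := by
      rw [neg_add, rpow_add hb, rpow_neg hb.le, rpow_natCast]
    have hbn : b ^ n ≠ 0 := pow_ne_zero _ hb.ne'
    rw [hpow, div_pow]
    field_simp
  have hsum : b ^ (-c) * exp (-a + a / b) = exp (-a) * b ^ (-c) * exp (a / b) := by
    rw [exp_add]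
    ring
  rw [hterm, hsum]
  exact hexp.mul_left _

theorem neg_add_div_one_add_div {a x d : ℝ} (hd : d ≠ 0) (hxd : x + d ≠ 0) :
    -a + a / (1 + x / d) = -(a * x) / (x + d) := by
  rw [one_add_div hd, add_comm d x, div_div_eq_mul_div]
  field_simp
  ring

/-- Closed-form simplification of the Laplace transform of the κ-μ fading power
distribution (Lemma 2 of the paper, κ-μ case). -/
theorem kappa_mu_laplace_series (κ μ w s : ℝ) (hκ : 0 ≤ κ) (hμ : 0 < μ)
    (hw : 0 < w) (hs : 0 ≤ s) :
    HasSum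
      (fun n : ℕ => Real.exp (-(μ * κ)) * (μ * κ) ^ n / n.factorial *
        (1 + s * w / (μ * (1 + κ))) ^ (-((n : ℝ) + μ)))
      ((1 + s * w / (μ * (1 + κ))) ^ (-μ) *
        Real.exp (-(μ * κ * (s * w)) / (s * w + μ * (1 + κ)))) := by
  have hd : 0 < μ * (1 + κ) := by positivity
  have hsw : 0 ≤ s * w := by positivity
  have hb : 0 < 1 + s * w / (μ * (1 + κ)) := by positivity
  rw [← neg_add_div_one_add_div hd.ne' (by positivity)]
  exact hasSum_poisson_mul_rpow_neg hb (μ * κ) μ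
end

section
/- Let m ≥ 1 be a natural number, b > 0, and let g : ℝ → ℝ be m-times continuously differentiable on [0, ∞) such that for every 0 ≤ i ≤ m, the i-th derivative of z ↦ z^{m−1} g(z) is polynomially bounded on [0, ∞). Define g_m(z) = (1/(m−1)!) · dᵐ/dzᵐ ( z^{m−1} g(z) ). Then ∫_0^∞ (b^m z^{m−1}/(m−1)!) · g(z) · e^{−bz} dz = g(0) + ∫_0^∞ g_m(z) · e^{−bz} dz. -/
/-!
Integrating by parts against `e^{-bz}` gives `b ∫ h e^{-bz} = h 0 + ∫ h' e^{-bz}` as soon as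
`h` and `h'` grow at most polynomially, which kills the boundary term at infinity. Applied `m` times
to the derivatives of `f z = z^(m-1) g z`, this turns `b^m ∫ f e^{-bz}` into
`∑_{j<m} b^(m-1-j) f^(j)(0) + ∫ f^(m) e^{-bz}`, and by the Leibniz rule the only nonzero
boundary value is `f^(m-1)(0) = (m-1)! g 0`.
-/

open MeasureTheory Set Filter Asymptotics Real Topology

theorem isBigO_pow_of_abs_le_mul_one_add_pow {h : ℝ → ℝ} {C : ℝ} {k : ℕ}
    (hh : ∀ z ≥ (0 : ℝ), |h z| ≤ C * (1 + z) ^ k) : h =O[atTop] (· ^ k) := by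
  have hh' : h =O[atTop] fun z => (1 + z) ^ k := by
    refine IsBigO.of_bound C ?_
    filter_upwards [eventually_ge_atTop 0] with z hz
    rw [norm_eq_abs, norm_eq_abs, abs_of_nonneg (pow_nonneg (by linarith : (0 : ℝ) ≤ 1 + z) k)]
    exact hh z hz
  refine hh'.trans (IsBigO.pow ?_ k)
  refine IsBigO.of_bound 2 ?_
  filter_upwards [eventually_ge_atTop 1] with z hz
  rw [norm_eq_abs, norm_eq_abs, abs_of_nonneg (by linarith), abs_of_nonneg (by linarith)]
  linarith

theorem Asymptotics.IsBigO.mul_exp_neg_isLittleO {h : ℝ → ℝ} {k : ℕ}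
    (hh : h =O[atTop] (· ^ k)) {b c : ℝ} (hcb : c < b) :
    (fun z => h z * exp (-b * z)) =o[atTop] fun z => exp (-c * z) := by
  have := (hh.trans_isLittleO (isLittleO_pow_exp_pos_mul_atTop k (sub_pos.2 hcb))).mul_isBigO
    (isBigO_refl (fun z => exp (-b * z)) atTop)
  refine this.congr_right fun z => ?_
  rw [← exp_add]; ring_nf

theorem Asymptotics.IsBigO.tendsto_mul_exp_neg {h : ℝ → ℝ} {k : ℕ}
    (hh : h =O[atTop] (· ^ k)) {b : ℝ} (hb : 0 < b) :
    Tendsto (fun z => h z * exp (-b * z)) atTop (𝓝 0) := by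
  have := hh.mul_exp_neg_isLittleO (c := 0) hb
  simp only [neg_zero, zero_mul, exp_zero] at this
  exact (isLittleO_one_iff ℝ).1 this

theorem Asymptotics.IsBigO.integrableOn_mul_exp_neg {h : ℝ → ℝ} {k : ℕ}
    (hh : h =O[atTop] (· ^ k)) (hc : ContinuousOn h (Ici 0)) {b : ℝ} (hb : 0 < b) :
    IntegrableOn (fun z => h z * exp (-b * z)) (Ioi 0) := by
  refine integrable_of_isBigO_exp_neg (half_pos hb) (hc.mul (by fun_prop)) ?_
  simpa using (hh.mul_exp_neg_isLittleO (half_lt_self hb)).isBigO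

theorem mul_integral_mul_exp_neg_eq_add {b : ℝ} (hb : 0 < b) {h h' : ℝ → ℝ} {k k' : ℕ}
    (hc : ContinuousOn h (Ici 0)) (hc' : ContinuousOn h' (Ici 0))
    (hderiv : ∀ z ∈ Ioi 0, HasDerivAt h (h' z) z)
    (hO : h =O[atTop] (· ^ k)) (hO' : h' =O[atTop] (· ^ k')) :
    b * ∫ z in Ioi 0, h z * exp (-b * z) = h 0 + ∫ z in Ioi 0, h' z * exp (-b * z) := by
  have hint := hO.integrableOn_mul_exp_neg hc hb
  have hint' := hO'.integrableOn_mul_exp_neg hc' hb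
  have hFTC : ∫ z in Ioi 0, (h' z * exp (-b * z) - b * (h z * exp (-b * z)))
      = 0 - h 0 * exp (-b * 0) := by
    refine integral_Ioi_of_hasDerivAt_of_tendsto (f := fun z => h z * exp (-b * z))
      ((hc 0 self_mem_Ici).mul (by fun_prop)) (fun z hz => ?_) (hint'.sub (hint.const_mul b))
      (hO.tendsto_mul_exp_neg hb)
    exact ((hderiv z hz).fun_mul ((hasDerivAt_id' z).const_mul (-b)).exp).congr_deriv (by ring)
  rw [integral_sub hint' (hint.const_mul b), integral_const_mul] at hFTC
  simp only [mul_zero, exp_zero, mul_one] at hFTC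
  linarith

theorem pow_mul_integral_mul_exp_neg_eq_sum {b : ℝ} (hb : 0 < b) {F : ℕ → ℝ → ℝ}
    {n : ℕ} (hc : ∀ i ≤ n, ContinuousOn (F i) (Ici 0))
    (hderiv : ∀ i < n, ∀ z ∈ Ioi 0, HasDerivAt (F i) (F (i + 1) z) z)
    (hO : ∀ i ≤ n, ∃ k : ℕ, F i =O[atTop] (· ^ k)) :
    b ^ n * ∫ z in Ioi 0, F 0 z * exp (-b * z) =
      ∑ j ∈ Finset.range n, b ^ (n - 1 - j) * F j 0 +
        ∫ z in Ioi 0, F n z * exp (-b * z) := by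
  induction n with
  | zero => simp
  | succ n ih =>
    obtain ⟨k, hk⟩ := hO n n.le_succ
    obtain ⟨k', hk'⟩ := hO (n + 1) le_rfl
    have hstep := mul_integral_mul_exp_neg_eq_add hb (hc n n.le_succ) (hc (n + 1) le_rfl)
      (hderiv n n.lt_succ_self) hk hk'
    have hpow : ∀ j ∈ Finset.range n, b * (b ^ (n - 1 - j) * F j 0) = b ^ (n - j) * F j 0 := by
      intro j hj
      rw [← mul_assoc, ← pow_succ', show n - 1 - j + 1 = n - j by
        have := Finset.mem_range.1 hj; omega]
    rw [pow_succ', mul_assoc, ih (fun i hi => hc i (by omega)) (fun i hi => hderiv i (by omega))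
      (fun i hi => hO i (by omega)), mul_add, hstep, Finset.mul_sum, Finset.sum_congr rfl hpow,
      Finset.sum_range_succ]
    simp only [Nat.add_sub_cancel, Nat.sub_self, pow_zero, one_mul]
    ring

theorem hasDerivAt_iteratedDerivWithin_Ici {f : ℝ → ℝ} {n i : ℕ} {a z : ℝ}
    (hf : ContDiffOn ℝ n f (Ici a)) (hi : i < n) (hz : a < z) :
    HasDerivAt (iteratedDerivWithin i f (Ici a)) (iteratedDerivWithin (i + 1) f (Ici a) z) z := by
  have hd := hf.differentiableOn_iteratedDerivWithin (by exact_mod_cast hi) (uniqueDiffOn_Ici a)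
    z (mem_Ici.2 hz.le)
  rw [iteratedDerivWithin_succ]
  exact hd.hasDerivWithinAt.hasDerivAt (Ici_mem_nhds hz)

section PowMul

variable {s : Set ℝ} {g : ℝ → ℝ} {p j : ℕ}

theorem iteratedDerivWithin_pow_mul_at_zero (hs : UniqueDiffOn ℝ s) (h0 : (0 : ℝ) ∈ s)
    (hg : ContDiffWithinAt ℝ j g s 0) :
    iteratedDerivWithin j (fun z => z ^ p * g z) s 0 = ∑ i ∈ Finset.range (j + 1),
      (j.choose i * p.descFactorial i * (0 : ℝ) ^ (p - i)) *
        iteratedDerivWithin (j - i) g s 0 := by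
  rw [show (fun z => z ^ p * g z) = (· ^ p) * g from rfl,
    iteratedDerivWithin_mul h0 hs (by fun_prop) hg]
  simp only [iteratedDerivWithin_pow h0 hs, mul_assoc]

theorem iteratedDerivWithin_pow_mul_at_zero_of_lt (hs : UniqueDiffOn ℝ s) (h0 : (0 : ℝ) ∈ s)
    (hg : ContDiffWithinAt ℝ j g s 0) (hj : j < p) :
    iteratedDerivWithin j (fun z => z ^ p * g z) s 0 = 0 := by
  rw [iteratedDerivWithin_pow_mul_at_zero hs h0 hg]
  refine Finset.sum_eq_zero fun i hi => ?_
  rw [zero_pow (by have := Finset.mem_range.1 hi; omega)]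
  simp

theorem iteratedDerivWithin_pow_mul_at_zero_self (hs : UniqueDiffOn ℝ s) (h0 : (0 : ℝ) ∈ s)
    (hg : ContDiffWithinAt ℝ p g s 0) :
    iteratedDerivWithin p (fun z => z ^ p * g z) s 0 = p.factorial * g 0 := by
  rw [iteratedDerivWithin_pow_mul_at_zero hs h0 hg, Finset.sum_eq_single_of_mem p
    (Finset.self_mem_range_succ p)]
  · simp [Nat.descFactorial_self]
  · intro i hi hip
    rw [zero_pow (by have := Finset.mem_range.1 hi; omega)]
    simp

end PowMul

/-- Integration-by-parts identity for the Gamma density of integer shape m and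
rate b, the core computational step in Theorems 1 and 2 (Hamdi's lemma). -/
theorem gamma_density_integration_by_parts (m : ℕ) (hm : 1 ≤ m) (b : ℝ) (hb : 0 < b)
    (g : ℝ → ℝ) (hg : ContDiffOn ℝ m g (Set.Ici 0))
    (hbound : ∀ i ≤ m, ∃ C : ℝ, ∃ k : ℕ, ∀ z ≥ (0 : ℝ),
      |iteratedDerivWithin i (fun z : ℝ => z ^ (m - 1) * g z) (Set.Ici 0) z| ≤
        C * (1 + z) ^ k) :
    ∫ z in Set.Ioi (0 : ℝ),
        b ^ m * z ^ (m - 1) / (m - 1).factorial * g z * Real.exp (-b * z) =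
      g 0 + ∫ z in Set.Ioi (0 : ℝ),
        (1 / (m - 1).factorial : ℝ) *
          iteratedDerivWithin m (fun z : ℝ => z ^ (m - 1) * g z) (Set.Ici 0) z *
          Real.exp (-b * z) := by
  set f : ℝ → ℝ := fun z => z ^ (m - 1) * g z
  have hf : ContDiffOn ℝ m f (Ici 0) := (contDiffOn_id.pow (m - 1)).mul hg
  have hg0 : ∀ j ≤ m, ContDiffWithinAt ℝ j g (Ici 0) 0 := fun j hj =>
    (hg 0 self_mem_Ici).of_le (by exact_mod_cast hj)
  have hparts := pow_mul_integral_mul_exp_neg_eq_sum hb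
    (F := fun i => iteratedDerivWithin i f (Ici 0)) (n := m)
    (fun i hi => hf.continuousOn_iteratedDerivWithin (by exact_mod_cast hi) (uniqueDiffOn_Ici 0))
    (fun i hi z hz => hasDerivAt_iteratedDerivWithin_Ici hf hi hz)
    fun i hi => let ⟨_, k, hk⟩ := hbound i hi; ⟨k, isBigO_pow_of_abs_le_mul_one_add_pow hk⟩
  have hboundary :
      ∑ j ∈ Finset.range m, b ^ (m - 1 - j) * iteratedDerivWithin j f (Ici 0) 0 =
        (m - 1).factorial * g 0 := by
    rw [Finset.sum_eq_single_of_mem (m - 1) (by simp; omega)]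
    · rw [iteratedDerivWithin_pow_mul_at_zero_self (uniqueDiffOn_Ici 0) self_mem_Ici
        (hg0 _ (by omega)), Nat.sub_self, pow_zero, one_mul]
    · intro j hj hne
      rw [iteratedDerivWithin_pow_mul_at_zero_of_lt (uniqueDiffOn_Ici 0) self_mem_Ici
        (hg0 _ (by simp at hj; omega)) (by simp at hj; omega), mul_zero]
  rw [hboundary, iteratedDerivWithin_zero] at hparts
  calc ∫ z in Ioi 0, b ^ m * z ^ (m - 1) / (m - 1).factorial * g z * exp (-b * z)
      = b ^ m / (m - 1).factorial * ∫ z in Ioi 0, f z * exp (-b * z) := by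
        rw [← integral_const_mul]; congr 1 with z; ring
    _ = g 0 + 1 / (m - 1).factorial *
          ∫ z in Ioi 0, iteratedDerivWithin m f (Ici 0) z * exp (-b * z) := by
        rw [div_mul_eq_mul_div, hparts]; field_simp
    _ = _ := by rw [← integral_const_mul]; congr 2 with z; ring
end

section
/- Let η > 0 and μ > 0 be real, and set h = (2 + η⁻¹ + η)/4 and H = (η⁻¹ − η)/4. Then the series ∑_{n=0}^∞ (Γ(μ+n)/(n!·Γ(μ))) · H^{2n}/h^{μ+2n} converges and equals 1. -/
/-!
The identity H² = h(h − 1) makes x := H²/h² equal to 1 − 1/h ∈ [0, 1), and the n-th weight is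
h^(-μ) xⁿ times the generalized binomial coefficient C(n + μ − 1, n). The negative binomial series
∑ C(n + μ − 1, n) xⁿ = (1 − x)^(-μ) = h^μ then shows that the weights sum to 1.
-/

namespace Real

theorem Gamma_add_nat_eq_ascPochhammer_mul {μ : ℝ} (hμ : ∀ k : ℕ, μ ≠ -k) (n : ℕ) :
    Gamma (μ + n) = (ascPochhammer ℝ n).eval μ * Gamma μ := by
  induction n with
  | zero => simp
  | succ n ih =>
    have hne : μ + n ≠ 0 := fun h => hμ n (by linarith)
    rw [Nat.cast_succ, ← add_assoc, Gamma_add_one hne, ih, ascPochhammer_succ_eval]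
    ring

theorem Gamma_add_nat_div_eq_choose {μ : ℝ} (hμ : ∀ k : ℕ, μ ≠ -k) (n : ℕ) :
    Gamma (μ + n) / (n.factorial * Gamma μ) = Ring.choose (μ + n - 1) n := by
  have hΓ : Gamma μ ≠ 0 := Gamma_ne_zero fun m h => hμ m h
  rw [← Ring.multichoose_eq, Gamma_add_nat_eq_ascPochhammer_mul hμ,
    ← Polynomial.ascPochhammer_smeval_eq_eval,
    ← Ring.factorial_nsmul_multichoose_eq_ascPochhammer, nsmul_eq_mul]
  field_simp

theorem hasSum_Gamma_add_nat_div_mul_pow {μ x : ℝ} (hμ : ∀ k : ℕ, μ ≠ -k) (hx : |x| < 1) :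
    HasSum (fun n : ℕ => Gamma (μ + n) / (n.factorial * Gamma μ) * x ^ n) ((1 - x) ^ (-μ)) := by
  have := (one_div_one_sub_rpow_hasFPowerSeriesOnBall_zero μ).hasSum (y := x) ?_
  · simp only [FormalMultilinearSeries.ofScalars_apply_eq, smul_eq_mul, zero_add] at this
    simp_rw [Gamma_add_nat_div_eq_choose hμ]
    rwa [rpow_neg (by linarith [le_abs_self x]), ← one_div]
  · simpa [enorm_eq_nnnorm, ← NNReal.coe_lt_coe] using hx

theorem hasSum_Gamma_add_nat_div_mul_pow_div_rpow_eq_one {μ h H : ℝ} (hμ : ∀ k : ℕ, μ ≠ -k)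
    (hh : 0 < h) (hH : H ^ 2 = h * (h - 1)) :
    HasSum (fun n : ℕ => Gamma (μ + n) / (n.factorial * Gamma μ) *
      (H ^ (2 * n) / h ^ (μ + 2 * (n : ℝ)))) 1 := by
  set x := H ^ 2 / h ^ 2
  have hx_nonneg : 0 ≤ x := by positivity
  have hx_eq : x = 1 - h⁻¹ := by
    simp only [x, hH]
    field_simp
  have hx : |x| < 1 := by
    rw [abs_of_nonneg hx_nonneg, hx_eq]
    linarith [inv_pos.2 hh]
  have hterm (n : ℕ) : H ^ (2 * n) / h ^ (μ + 2 * (n : ℝ)) = x ^ n * h ^ (-μ) := by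
    rw [rpow_add hh, show (2 * n : ℝ) = ((2 * n : ℕ) : ℝ) by push_cast; ring, rpow_natCast,
      rpow_neg hh.le, pow_mul, pow_mul, div_pow]
    field_simp
  have hsum : (1 - x) ^ (-μ) * h ^ (-μ) = 1 := by
    rw [hx_eq, sub_sub_cancel, inv_rpow hh.le, ← rpow_neg hh.le, ← rpow_add hh]
    simp
  simpa only [hterm, ← mul_assoc, hsum] using
    (hasSum_Gamma_add_nat_div_mul_pow hμ hx).mul_right (h ^ (-μ))

end Real

/-- The mixture weights aₙ = C(n+μ−1,n)·H^{2n}/h^{μ+2n} of the η-μ power density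
sum to 1 (used in Theorem 2 of the paper). -/
theorem eta_mu_weights_sum_one (η μ : ℝ) (hη : 0 < η) (hμ : 0 < μ) :
    HasSum
      (fun n : ℕ => Real.Gamma (μ + n) / (n.factorial * Real.Gamma μ) *
        (((η⁻¹ - η) / 4) ^ (2 * n) / ((2 + η⁻¹ + η) / 4) ^ (μ + 2 * (n : ℝ))))
      1 := by
  refine Real.hasSum_Gamma_add_nat_div_mul_pow_div_rpow_eq_one (fun k => ?_) (by positivity) ?_
  · have : (0 : ℝ) ≤ k := k.cast_nonneg
    linarith
  · field_simp
    ring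
end

section
/- Let w̄ > 0, N₀ > 0, let W be an exponentially distributed real random variable with mean w̄ (density e^{−x/w̄}/w̄ for x ≥ 0), and let I be a nonnegative real random variable independent of W. Then E[ log(1 + W/(I+N₀)) ] = ∫_0^∞ E[ e^{−(eᵗ−1)·I/w̄} ] · e^{−(eᵗ−1)·N₀/w̄} dt. -/
open MeasureTheory ProbabilityTheory Set

/-! By the layer-cake formula,
`E[log(1 + W/(I+N₀))] = ∫_0^∞ P(log(1 + W/(I+N₀)) > t) dt`, and the event is
`{W > (eᵗ - 1)(I + N₀)}`. Conditioning on the independent `I`, the exponential survival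
function `P(W > x) = e^{-x/w̄}` turns its probability into `E[e^{-(eᵗ-1)I/w̄}] e^{-(eᵗ-1)N₀/w̄}`.
-/

lemma integral_eq_integral_measureReal_lt {α : Type*} [MeasurableSpace α] {μ : Measure α}
    [IsFiniteMeasure μ] {f : α → ℝ} (hf_nn : 0 ≤ᵐ[μ] f) (hf : AEMeasurable f μ) :
    ∫ a, f a ∂μ = ∫ t in Ioi 0, μ.real {a | t < f a} := by
  -- No integrability is needed: both sides are `toReal` of the same lintegral, even if it is `∞`.
  have hmeas : Measurable fun t : ℝ => μ {a | t < f a} :=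
    Antitone.measurable fun _ _ hst => measure_mono fun _ h => hst.trans_lt h
  rw [integral_eq_lintegral_of_nonneg_ae hf_nn hf.aestronglyMeasurable,
    lintegral_eq_lintegral_meas_lt μ hf_nn hf]
  exact (integral_toReal hmeas.aemeasurable (ae_of_all _ fun _ => measure_lt_top _ _)).symm

lemma withDensity_exp_div_eq_expMeasure (w : ℝ) :
    (volume : Measure ℝ).withDensity
        (fun x => ENNReal.ofReal (if 0 ≤ x then Real.exp (-x / w) / w else 0)) =
      expMeasure w⁻¹ := by
  change _ = volume.withDensity (exponentialPDF w⁻¹)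
  congr 1
  funext x
  rw [exponentialPDF_eq]
  congr 2
  rw [div_eq_inv_mul, neg_div, div_eq_inv_mul]

lemma ae_nonneg_expMeasure (r : ℝ) : ∀ᵐ x ∂expMeasure r, 0 ≤ x := by
  rw [expMeasure, gammaMeasure, ae_withDensity_iff' (f := gammaPDF 1 r)
    (measurable_gammaPDFReal 1 r).ennreal_ofReal.aemeasurable]
  exact ae_of_all _ fun x hx => not_lt.1 fun hneg => hx (gammaPDF_of_neg hneg)

lemma expMeasure_real_Ioi {r c : ℝ} (hr : 0 < r) (hc : 0 ≤ c) :
    (expMeasure r).real (Ioi c) = Real.exp (-(r * c)) := by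
  have := isProbabilityMeasure_expMeasure hr
  rw [← compl_Iic, probReal_compl_eq_one_sub measurableSet_Iic, ← cdf_eq_real,
    cdf_expMeasure_eq hr, if_pos hc, sub_sub_cancel]

lemma measureReal_lt_eq_integral_of_indepFun {Ω β : Type*} [MeasurableSpace Ω]
    [MeasurableSpace β] {μ : Measure Ω} [IsFiniteMeasure μ] {W : Ω → ℝ} {X : Ω → β}
    {h : β → ℝ} (hW : Measurable W) (hX : Measurable X) (hh : Measurable h)
    (hindep : IndepFun W X μ) :
    μ.real {ω | h (X ω) < W ω} = ∫ ω, (μ.map W).real (Ioi (h (X ω))) ∂μ := by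
  have hS : MeasurableSet {p : ℝ × β | h p.2 < p.1} :=
    measurableSet_lt (hh.comp measurable_snd) measurable_fst
  have hsurv : Measurable fun x => μ.map W (Ioi x) :=
    Antitone.measurable fun _ _ hxy => measure_mono (Ioi_subset_Ioi hxy)
  have hjoint := (indepFun_iff_map_prod_eq_prod_map_map hW.aemeasurable hX.aemeasurable).1 hindep
  calc μ.real {ω | h (X ω) < W ω}
      = (((μ.map W).prod (μ.map X)) {p : ℝ × β | h p.2 < p.1}).toReal := by
        rw [← hjoint, Measure.map_apply (hW.prodMk hX) hS]; rfl
    _ = (∫⁻ y, μ.map W (Ioi (h y)) ∂μ.map X).toReal := by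
        rw [Measure.prod_apply_symm hS]; rfl
    _ = ∫ ω, (μ.map W).real (Ioi (h (X ω))) ∂μ := by
        rw [lintegral_map (f := fun y => μ.map W (Ioi (h y))) (hsurv.comp hh) hX]
        exact (integral_toReal (hsurv.comp (hh.comp hX)).aemeasurable
          (ae_of_all _ fun _ => measure_lt_top _ _)).symm

lemma lt_log_one_add_div_iff {t a d : ℝ} (ha : 0 ≤ a) (hd : 0 < d) :
    t < Real.log (1 + a / d) ↔ (Real.exp t - 1) * d < a := by
  rw [Real.lt_log_iff_exp_lt (by positivity), ← sub_lt_iff_lt_add', lt_div_iff₀ hd]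

/-- Average rate over a Rayleigh-faded intended link (exponential power W with
mean w̄) with arbitrary independent nonnegative interference I:
E[log(1 + W/(I+N₀))] = ∫_0^∞ E[e^{−(eᵗ−1)I/w̄}] e^{−(eᵗ−1)N₀/w̄} dt. -/
theorem rayleigh_average_rate {Ω : Type*} [MeasureSpace Ω]
    [IsProbabilityMeasure (volume : Measure Ω)]
    (w N₀ : ℝ) (hw : 0 < w) (hN : 0 < N₀)
    (W I : Ω → ℝ) (hWm : Measurable W) (hIm : Measurable I)
    (hInn : ∀ ω, 0 ≤ I ω)
    (hindep : IndepFun W I (volume : Measure Ω))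
    (hlaw : Measure.map W volume = (volume : Measure ℝ).withDensity
      (fun x => ENNReal.ofReal (if 0 ≤ x then Real.exp (-x / w) / w else 0))) :
    (∫ ω, Real.log (1 + W ω / (I ω + N₀))) =
      ∫ t in Set.Ioi (0 : ℝ),
        (∫ ω, Real.exp (-(Real.exp t - 1) * I ω / w)) *
          Real.exp (-(Real.exp t - 1) * N₀ / w) := by
  rw [withDensity_exp_div_eq_expMeasure] at hlaw
  have hD : ∀ ω, 0 < I ω + N₀ := fun ω => add_pos_of_nonneg_of_pos (hInn ω) hN
  have hW_nn : ∀ᵐ ω, 0 ≤ W ω :=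
    ae_of_ae_map hWm.aemeasurable (hlaw ▸ ae_nonneg_expMeasure _)
  have hrate_nn : ∀ᵐ ω, 0 ≤ Real.log (1 + W ω / (I ω + N₀)) := by
    filter_upwards [hW_nn] with ω hω
    exact Real.log_nonneg (le_add_of_nonneg_right (div_nonneg hω (hD ω).le))
  rw [integral_eq_integral_measureReal_lt hrate_nn (by fun_prop)]
  refine setIntegral_congr_fun measurableSet_Ioi fun t ht => ?_
  have hc : 0 ≤ Real.exp t - 1 := by linarith [Real.add_one_le_exp t, mem_Ioi.1 ht]
  calc volume.real {ω | t < Real.log (1 + W ω / (I ω + N₀))}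
      = volume.real {ω | (Real.exp t - 1) * (I ω + N₀) < W ω} := by
        refine measureReal_congr (Filter.eventuallyEq_set.2 ?_)
        filter_upwards [hW_nn] with ω hω
        exact lt_log_one_add_div_iff hω (hD ω)
    _ = ∫ ω, (volume.map W).real (Ioi ((Real.exp t - 1) * (I ω + N₀))) :=
        measureReal_lt_eq_integral_of_indepFun (h := fun x => (Real.exp t - 1) * (x + N₀))
          hWm hIm (by fun_prop) hindep
    _ = ∫ ω, Real.exp (-(Real.exp t - 1) * I ω / w) *
          Real.exp (-(Real.exp t - 1) * N₀ / w) := by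
        congr 1 with ω
        rw [hlaw, expMeasure_real_Ioi (inv_pos.2 hw) (mul_nonneg hc (hD ω).le), ← Real.exp_add]
        ring_nf
    _ = _ := integral_mul_const _ _
end

section
/- Let m ≥ 1 be a natural number, w̄ > 0, N₀ > 0, let W be a Gamma-distributed real random variable with shape m and rate m/w̄ (density (m/w̄)^m x^{m−1} e^{−mx/w̄}/Γ(m) for x > 0), and let I be a nonnegative real random variable independent of W, with Laplace transform L_I(s) = E[e^{−sI}]. Then E[ log(1 + W/(I+N₀)) ] = (w̄/(m·N₀)) · ∫_0^∞ g_m( w̄·x/(m·N₀) ) · L_I(x/N₀) · e^{−x} dx, where g_m(z) = (1/z)·(1 − (1+z)^{−m}). -/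
/-!
Frullani's integral `log (1 + a / b) = ∫₀^∞ e^{-bx} (1 - e^{-ax}) / x dx`, taken with
`a = W / N₀` and `b = (I + N₀) / N₀`, writes the rate as an integral in `x`; after Tonelli the
inner expectation is `e^{-x} / x · E[e^{-xI/N₀} (1 - e^{-xW/N₀})]`, which independence factors
as `e^{-x} / x · L_I(x/N₀) (1 - L_W(x/N₀))`. The Laplace transform of the Gamma law of shape
`m` and rate `m / w̄` is `L_W(s) = (1 + w̄ s / m)^{-m}`, and `(w̄ / (m N₀)) / (w̄ x / (m N₀)) = 1 / x`.
-/

open MeasureTheory ProbabilityTheory Set Real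

lemma intervalIntegral_exp_neg_mul_right {x : ℝ} (hx : 0 < x) (b c : ℝ) :
    ∫ t in b..c, exp (-(t * x)) = (exp (-(b * x)) - exp (-(c * x))) / x := by
  rw [intervalIntegral.integral_comp_mul_right (fun t ↦ exp (-t)) hx.ne',
    intervalIntegral.integral_comp_neg, integral_exp, smul_eq_mul]
  field_simp

lemma lintegral_Ioi_exp_neg_mul {t : ℝ} (ht : 0 < t) :
    ∫⁻ x in Ioi 0, ENNReal.ofReal (exp (-(t * x))) = ENNReal.ofReal t⁻¹ := by
  have hint : IntegrableOn (fun x ↦ exp (-(t * x))) (Ioi 0) := by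
    simpa using exp_neg_integrableOn_Ioi 0 ht
  rw [← ofReal_integral_eq_lintegral_ofReal hint (.of_forall fun _ ↦ (exp_pos _).le)]
  simpa using congrArg ENNReal.ofReal (integral_rpow_mul_exp_neg_mul_Ioi one_pos ht)

/-- Frullani's integral for `t ↦ e^{-t}`; in `ℝ≥0∞` it needs no integrability hypothesis,
unlike `Frullani.integral_Ioi_eq`. -/
lemma lintegral_Ioi_exp_neg_mul_one_sub_exp_div {a b : ℝ} (ha : 0 ≤ a) (hb : 0 < b) :
    ∫⁻ x in Ioi 0, ENNReal.ofReal (exp (-(b * x)) * (1 - exp (-(a * x))) / x) =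
      ENNReal.ofReal (log (1 + a / b)) := by
  have hab : b ≤ a + b := by linarith
  -- `e^{-bx} (1 - e^{-ax}) / x = ∫_b^{a+b} e^{-tx} dt`; integrate in `x` first.
  have hinner : ∀ x ∈ Ioi (0 : ℝ), ENNReal.ofReal (exp (-(b * x)) * (1 - exp (-(a * x))) / x) =
      ∫⁻ t in Ioc b (a + b), ENNReal.ofReal (exp (-(t * x))) := by
    intro x hx
    rw [← ofReal_integral_eq_lintegral_ofReal (by fun_prop : Continuous _).integrableOn_Ioc
      (.of_forall fun _ ↦ (exp_pos _).le), ← intervalIntegral.integral_of_le hab,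
      intervalIntegral_exp_neg_mul_right hx, mul_one_sub, ← exp_add]
    ring_nf
  have hint : IntegrableOn (fun t : ℝ ↦ t⁻¹) (Ioc b (a + b)) :=
    ((continuousOn_inv₀.mono fun t ht ↦ (hb.trans_le ht.1).ne').integrableOn_Icc).mono_set
      Ioc_subset_Icc_self
  rw [setLIntegral_congr_fun measurableSet_Ioi hinner,
    lintegral_lintegral_swap (by fun_prop : Measurable _).aemeasurable,
    setLIntegral_congr_fun measurableSet_Ioc fun t ht ↦ lintegral_Ioi_exp_neg_mul (hb.trans ht.1),
    ← ofReal_integral_eq_lintegral_ofReal hint ((ae_restrict_iff' measurableSet_Ioc).2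
      (.of_forall fun t ht ↦ inv_nonneg.2 (hb.trans ht.1).le)),
    ← intervalIntegral.integral_of_le hab, integral_inv_of_pos hb (by linarith)]
  congr 2
  field_simp
  ring

lemma exp_mul_mul_one_sub_exp_mul_mem_Icc {t u v : ℝ} (ht : t ≤ 0) (hu : 0 ≤ u) (hv : 0 ≤ v) :
    exp (t * u) * (1 - exp (t * v)) ∈ Icc 0 1 := by
  have hu' : exp (t * u) ≤ 1 := exp_le_one_iff.2 (mul_nonpos_of_nonpos_of_nonneg ht hu)
  have hv' : exp (t * v) ≤ 1 := exp_le_one_iff.2 (mul_nonpos_of_nonpos_of_nonneg ht hv)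
  constructor <;> nlinarith [exp_pos (t * u), exp_pos (t * v)]

section Rate

variable {Ω : Type*} [MeasurableSpace Ω] {μ : Measure Ω} {W I : Ω → ℝ} {N₀ t : ℝ}

lemma integrable_exp_mul_of_nonpos_of_ae_nonneg [IsFiniteMeasure μ] {X : Ω → ℝ} (ht : t ≤ 0)
    (hX : AEMeasurable X μ) (hX0 : ∀ᵐ ω ∂μ, 0 ≤ X ω) : Integrable (fun ω ↦ exp (t * X ω)) μ :=
  .of_mem_Icc 0 1 (measurable_exp.comp_aemeasurable (hX.const_mul t)) <| by
    filter_upwards [hX0] with ω hω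
    exact ⟨(exp_pos _).le, exp_le_one_iff.2 (mul_nonpos_of_nonpos_of_nonneg ht hω)⟩

lemma ProbabilityTheory.IndepFun.integral_exp_mul_mul_one_sub_exp_mul [IsProbabilityMeasure μ] (h : W ⟂ᵢ[μ] I)
    (hW : Integrable (fun ω ↦ exp (t * W ω)) μ) (hI : Integrable (fun ω ↦ exp (t * I ω)) μ) :
    ∫ ω, exp (t * I ω) * (1 - exp (t * W ω)) ∂μ = mgf I μ t * (1 - mgf W μ t) := by
  have hind := (h.exp_mul t t).symm
  have hIW : Integrable (fun ω ↦ exp (t * I ω) * exp (t * W ω)) μ := hind.integrable_mul hI hW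
  simp_rw [mul_one_sub]
  rw [integral_sub hI hIW]
  exact congrArg _ (hind.integral_mul_eq_mul_integral hI.aestronglyMeasurable
    hW.aestronglyMeasurable)

theorem integral_log_one_add_div_add_eq_integral_Ioi_integral [IsFiniteMeasure μ] (hN : 0 < N₀)
    (hW : Measurable W) (hI : Measurable I) (hW0 : ∀ᵐ ω ∂μ, 0 ≤ W ω)
    (hI0 : ∀ᵐ ω ∂μ, 0 ≤ I ω) :
    ∫ ω, log (1 + W ω / (I ω + N₀)) ∂μ =
      ∫ x in Ioi 0, ∫ ω, exp (-x) / x *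
        (exp (-(x / N₀) * I ω) * (1 - exp (-(x / N₀) * W ω))) ∂μ := by
  set F : ℝ → Ω → ℝ := fun x ω ↦
    exp (-x) / x * (exp (-(x / N₀) * I ω) * (1 - exp (-(x / N₀) * W ω)))
  have hF_mem : ∀ x ∈ Ioi (0 : ℝ), ∀ᵐ ω ∂μ, F x ω ∈ Icc 0 (exp (-x) / x) := by
    intro x hx
    filter_upwards [hW0, hI0] with ω hWω hIω
    have h := exp_mul_mul_one_sub_exp_mul_mem_Icc
      (neg_nonpos.2 (div_nonneg (le_of_lt hx) hN.le)) hIω hWω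
    have hc : 0 ≤ exp (-x) / x := div_nonneg (exp_pos _).le (le_of_lt hx)
    exact ⟨mul_nonneg hc h.1, mul_le_of_le_one_right hc h.2⟩
  have hlog : ∀ᵐ ω ∂μ, ENNReal.ofReal (log (1 + W ω / (I ω + N₀))) =
      ∫⁻ x in Ioi 0, ENNReal.ofReal (F x ω) := by
    filter_upwards [hW0, hI0] with ω hWω hIω
    have hIN : 0 < I ω + N₀ := by linarith
    rw [show W ω / (I ω + N₀) = W ω / N₀ / ((I ω + N₀) / N₀) by field_simp,
      ← lintegral_Ioi_exp_neg_mul_one_sub_exp_div (div_nonneg hWω hN.le) (by positivity)]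
    refine setLIntegral_congr_fun measurableSet_Ioi fun x _ ↦ ?_
    rw [show -((I ω + N₀) / N₀ * x) = -x + -(x / N₀) * I ω by field_simp; ring, exp_add]
    simp only [F]
    ring_nf
  have hinner : ∀ x ∈ Ioi (0 : ℝ),
      ∫⁻ ω, ENNReal.ofReal (F x ω) ∂μ = ENNReal.ofReal (∫ ω, F x ω ∂μ) := fun x hx ↦
    (ofReal_integral_eq_lintegral_ofReal (.of_mem_Icc _ _ (by fun_prop) (hF_mem x hx))
      ((hF_mem x hx).mono fun _ h ↦ h.1)).symm
  have hlog0 : 0 ≤ᵐ[μ] fun ω ↦ log (1 + W ω / (I ω + N₀)) := by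
    filter_upwards [hW0, hI0] with ω hWω hIω
    have hIN : 0 < I ω + N₀ := by linarith
    exact log_nonneg (by linarith [div_nonneg hWω hIN.le])
  have hF0 : 0 ≤ᵐ[volume.restrict (Ioi 0)] fun x ↦ ∫ ω, F x ω ∂μ :=
    (ae_restrict_iff' measurableSet_Ioi).2 (.of_forall fun x hx ↦
      integral_nonneg_of_ae ((hF_mem x hx).mono fun _ h ↦ h.1))
  have hFmeas : StronglyMeasurable (Function.uncurry F) := by fun_prop
  rw [integral_eq_lintegral_of_nonneg_ae hlog0
      (by fun_prop : Measurable fun ω ↦ log (1 + W ω / (I ω + N₀))).aestronglyMeasurable,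
    integral_eq_lintegral_of_nonneg_ae hF0 hFmeas.integral_prod_right.aestronglyMeasurable,
    lintegral_congr_ae hlog, lintegral_lintegral_swap (by fun_prop),
    setLIntegral_congr_fun measurableSet_Ioi hinner]

theorem integral_log_one_add_div_add_eq_integral_Ioi_mgf [IsProbabilityMeasure μ] (hN : 0 < N₀)
    (hW : Measurable W) (hI : Measurable I) (hW0 : ∀ᵐ ω ∂μ, 0 ≤ W ω)
    (hI0 : ∀ᵐ ω ∂μ, 0 ≤ I ω) (hindep : W ⟂ᵢ[μ] I) :
    ∫ ω, log (1 + W ω / (I ω + N₀)) ∂μ =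
      ∫ x in Ioi 0, exp (-x) / x * (mgf I μ (-(x / N₀)) * (1 - mgf W μ (-(x / N₀)))) := by
  rw [integral_log_one_add_div_add_eq_integral_Ioi_integral hN hW hI hW0 hI0]
  refine setIntegral_congr_fun measurableSet_Ioi fun x (hx : 0 < x) ↦ ?_
  have ht : -(x / N₀) ≤ 0 := neg_nonpos.2 (div_pos hx hN).le
  rw [integral_const_mul, hindep.integral_exp_mul_mul_one_sub_exp_mul
    (integrable_exp_mul_of_nonpos_of_ae_nonneg ht hW.aemeasurable hW0)
    (integrable_exp_mul_of_nonpos_of_ae_nonneg ht hI.aemeasurable hI0)]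

end Rate

lemma gammaMeasure_ae_nonneg {a r : ℝ} : ∀ᵐ x ∂gammaMeasure a r, 0 ≤ x := by
  simp only [ae_iff, not_le]
  change gammaMeasure a r (Iio 0) = 0
  rw [gammaMeasure, withDensity_apply _ measurableSet_Iio]
  exact lintegral_gammaPDF_of_nonpos le_rfl

lemma mgf_id_gammaMeasure {a r t : ℝ} (ha : 0 < a) (hr : 0 < r) (ht : t < r) :
    mgf id (gammaMeasure a r) t = (1 - t / r) ^ (-a) := by
  have hrt : 0 < r - t := sub_pos.2 ht
  have hpdf : Measurable (gammaPDF a r) := (measurable_gammaPDFReal a r).ennreal_ofReal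
  have hdens : ∀ x, (gammaPDF a r x).toReal • exp (t * id x) = (Ici 0).indicator
      (fun x ↦ r ^ a / Gamma a * (x ^ (a - 1) * exp (-((r - t) * x)))) x := by
    intro x
    rw [gammaPDF, ENNReal.toReal_ofReal (gammaPDFReal_nonneg ha hr x), gammaPDFReal,
      smul_eq_mul, id]
    by_cases hx : 0 ≤ x
    · rw [indicator_of_mem (mem_Ici.2 hx), if_pos hx, mul_assoc, mul_assoc, ← exp_add]
      ring_nf
    · rw [indicator_of_notMem (mt mem_Ici.1 hx), if_neg hx, zero_mul]
  rw [mgf, gammaMeasure, integral_withDensity_eq_integral_toReal_smul hpdf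
    (.of_forall fun _ ↦ ENNReal.ofReal_lt_top), integral_congr_ae (.of_forall hdens),
    integral_indicator measurableSet_Ici, integral_Ici_eq_integral_Ioi, integral_const_mul,
    integral_rpow_mul_exp_neg_mul_Ioi ha hrt, rpow_neg (by linarith [div_lt_one hr |>.2 ht]),
    one_sub_div hr.ne', div_rpow hrt.le hr.le, one_div, inv_rpow hrt.le]
  field_simp [(Gamma_pos_of_pos ha).ne']

lemma withDensity_ofReal_natGammaPDF_eq_gammaMeasure {m : ℕ} (hm : 1 ≤ m) (r : ℝ) :
    (volume : Measure ℝ).withDensity (fun x ↦ ENNReal.ofReal (if 0 < x then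
      r ^ m * x ^ (m - 1) * exp (-r * x) / Gamma m else 0)) = gammaMeasure m r := by
  refine withDensity_congr_ae ?_
  filter_upwards [Measure.ae_ne volume 0] with x hx0
  rw [gammaPDF_eq]
  rcases hx0.lt_or_gt with hx | hx
  · rw [if_neg hx.not_gt, if_neg hx.not_ge]
  · have hpow : x ^ ((m : ℝ) - 1) = x ^ (m - 1) := by
      rw [← rpow_natCast, Nat.cast_sub hm, Nat.cast_one]
    rw [if_pos hx, if_pos hx.le, rpow_natCast, hpow, neg_mul]
    ring_nf

/-- Nakagami-m average rate formula (equation (38) of the paper): for a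
Gamma(m, m/w̄)-distributed intended power W and arbitrary independent nonnegative
interference I with Laplace transform L_I,
E[log(1 + W/(I+N₀))] = (w̄/(mN₀)) ∫_0^∞ g_m(w̄x/(mN₀)) L_I(x/N₀) e^{−x} dx
with g_m(z) = (1/z)(1 − (1+z)^{−m}). -/
theorem nakagami_average_rate {Ω : Type*} [MeasureSpace Ω]
    [IsProbabilityMeasure (volume : Measure Ω)]
    (m : ℕ) (hm : 1 ≤ m) (w N₀ : ℝ) (hw : 0 < w) (hN : 0 < N₀)
    (W I : Ω → ℝ) (hWm : Measurable W) (hIm : Measurable I)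
    (hInn : ∀ ω, 0 ≤ I ω)
    (hindep : IndepFun W I (volume : Measure Ω))
    (hlaw : Measure.map W volume = (volume : Measure ℝ).withDensity
      (fun x => ENNReal.ofReal (if 0 < x then
        ((m : ℝ) / w) ^ m * x ^ (m - 1) * Real.exp (-((m : ℝ) / w) * x) /
          Real.Gamma m else 0))) :
    (∫ ω, Real.log (1 + W ω / (I ω + N₀))) =
      w / ((m : ℝ) * N₀) *
        ∫ x in Set.Ioi (0 : ℝ),
          (1 / (w * x / ((m : ℝ) * N₀)) *
            (1 - ((1 + w * x / ((m : ℝ) * N₀)) ^ m)⁻¹)) *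
          (∫ ω, Real.exp (-(x / N₀) * I ω)) * Real.exp (-x) := by
  have hm0 : (0 : ℝ) < m := Nat.cast_pos.2 hm
  have hlawΓ : volume.map W = gammaMeasure m (m / w) :=
    hlaw.trans (withDensity_ofReal_natGammaPDF_eq_gammaMeasure hm _)
  have hW0 : ∀ᵐ ω, 0 ≤ W ω := ae_of_ae_map hWm.aemeasurable (hlawΓ ▸ gammaMeasure_ae_nonneg)
  have hmgfW : ∀ x, 0 < x → mgf W volume (-(x / N₀)) = ((1 + w * x / (m * N₀)) ^ m)⁻¹ := by
    intro x hx
    have hs : 0 < x / N₀ := div_pos hx hN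
    rw [← mgf_id_map hWm.aemeasurable, hlawΓ,
      mgf_id_gammaMeasure hm0 (by positivity) (by linarith [div_pos hm0 hw]),
      rpow_neg (by rw [neg_div, sub_neg_eq_add]; positivity), rpow_natCast]
    congr 2
    field_simp
    ring
  rw [integral_log_one_add_div_add_eq_integral_Ioi_mgf hN hWm hIm hW0 (ae_of_all _ hInn) hindep,
    ← integral_const_mul]
  refine setIntegral_congr_fun measurableSet_Ioi fun x (hx : 0 < x) ↦ ?_
  rw [hmgfW x hx, mgf]
  field_simp
end

section
/- For every natural number m ≥ 1 and every real z > 0, (1/(m−1)!) · dᵐ/dzᵐ ( z^{m−1} · log(1+z) ) = (1/z) · ( 1 − (1+z)^{−m} ). -/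
/-!
Write `g_k z = z ^ k * log (1 + z)`. Since `g_(k+1) = z * g_k`, Leibniz's rule gives
`D^(k+2) g_(k+1) = z * D^(k+2) g_k + (k + 2) * D^(k+1) g_k`, so the closed form
`D^(k+1) g_k z = k! * (1 - (1 + z)^(-(k+1))) / z` propagates by induction on `k`, starting from
`(log (1 + z))' = 1 / (1 + z)`. Because `Real.log` is `log |·|`, this holds at every `z ∉ {0, -1}`.
-/

open Filter Topology
open scoped Nat

theorem iteratedDeriv_succ_fun_id_mul {𝕜 : Type*} [NontriviallyNormedField 𝕜] {f : 𝕜 → 𝕜}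
    {x : 𝕜} {n : ℕ} (hf : ContDiffAt 𝕜 (n + 1) f x) :
    iteratedDeriv (n + 1) (fun z => z * f z) x =
      x * iteratedDeriv (n + 1) f x + (n + 1) * iteratedDeriv n f x := by
  rw [iteratedDeriv_fun_mul (f := fun z => z) (by fun_prop) (by exact_mod_cast hf),
    Finset.sum_range_succ', Finset.sum_range_succ']
  simp only [iteratedDeriv_fun_id, Nat.add_eq_zero_iff, one_ne_zero, and_false, and_self,
    ↓reduceIte, Nat.add_eq_right, mul_zero, Nat.reduceSubDiff, zero_mul, Finset.sum_const_zero,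
    zero_add, Nat.choose_one_right, Nat.cast_add, Nat.cast_one, mul_one, add_tsub_cancel_right,
    Nat.choose_zero_right, one_mul, tsub_zero]
  ring

theorem contDiffAt_pow_mul_log_one_add (k : ℕ) {n : WithTop ℕ∞} {x : ℝ} (hx : 1 + x ≠ 0) :
    ContDiffAt ℝ n (fun z => z ^ k * Real.log (1 + z)) x := by
  fun_prop (disch := assumption)

theorem hasDerivAt_one_sub_inv_one_add_pow_div (k : ℕ) {x : ℝ} (hx : x ≠ 0) (hx1 : 1 + x ≠ 0) :
    HasDerivAt (fun y => (1 - ((1 + y) ^ (k + 1))⁻¹) / y)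
      ((k + 1) / (1 + x) ^ (k + 2) / x - (1 - ((1 + x) ^ (k + 1))⁻¹) / x ^ 2) x := by
  have h := (((hasDerivAt_id' x).const_add 1).fun_pow (k + 1)).fun_inv (pow_ne_zero _ hx1)
    |>.const_sub 1 |>.fun_div (hasDerivAt_id' x) hx
  refine h.congr_deriv ?_
  rw [Nat.add_sub_cancel]
  push_cast
  field_simp
  ring

theorem iteratedDeriv_pow_mul_log_one_add (k : ℕ) {x : ℝ} (hx : x ≠ 0) (hx1 : 1 + x ≠ 0) :
    iteratedDeriv (k + 1) (fun z => z ^ k * Real.log (1 + z)) x =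
      k ! * (1 - ((1 + x) ^ (k + 1))⁻¹) / x := by
  induction k generalizing x with
  | zero =>
    have hlog := ((hasDerivAt_id' x).const_add 1).log hx1
    simp only [pow_zero, one_mul, zero_add, iteratedDeriv_one, hlog.deriv]
    field_simp
    ring
  | succ k ih =>
    have hclosed : iteratedDeriv (k + 1) (fun z => z ^ k * Real.log (1 + z)) =ᶠ[𝓝 x]
        fun y => k ! * ((1 - ((1 + y) ^ (k + 1))⁻¹) / y) := by
      have hx1' : ∀ᶠ y in 𝓝 x, 1 + y ≠ 0 :=
        (continuous_const.add continuous_id).continuousAt.eventually_ne hx1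
      filter_upwards [eventually_ne_nhds hx, hx1'] with y hy hy1
      rw [ih hy hy1, mul_div_assoc]
    have hderiv := hclosed.deriv_eq.trans
      ((hasDerivAt_one_sub_inv_one_add_pow_div k hx hx1).const_mul _).deriv
    have hmul : (fun z : ℝ => z ^ (k + 1) * Real.log (1 + z)) =
        fun z => z * (z ^ k * Real.log (1 + z)) := by
      funext z
      ring
    rw [hmul, iteratedDeriv_succ_fun_id_mul (contDiffAt_pow_mul_log_one_add k hx1), ih hx hx1,
      iteratedDeriv_succ, hderiv, Nat.factorial_succ]
    push_cast
    field_simp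
    ring

/-- Closed form for the derivative term in the rate formulas of Theorem 3:
(1/(m−1)!) dᵐ/dzᵐ ( z^{m−1} log(1+z) ) = (1/z)(1 − (1+z)^{−m}). -/
theorem iteratedDeriv_log_term (m : ℕ) (hm : 1 ≤ m) (z : ℝ) (hz : 0 < z) :
    (1 / (m - 1).factorial : ℝ) *
      iteratedDeriv m (fun z : ℝ => z ^ (m - 1) * Real.log (1 + z)) z =
    (1 / z) * (1 - ((1 + z) ^ m)⁻¹) := by
  obtain ⟨k, rfl⟩ := Nat.exists_eq_add_of_le' hm
  rw [Nat.add_sub_cancel, iteratedDeriv_pow_mul_log_one_add k hz.ne' (by positivity)]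
  field_simp
end
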